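/- Let 𝓜 be a regular collection of channel sets that is DF-reducible. Suppose M₁ and M₂ are two distinct member occurrences in 𝓜 with ch ∈ M₁ and d ch ∈ M₂ for some channel ch. Then the collection 𝓜' obtained from 𝓜 by removing M₁ and M₂ and adding the two sets M₁ \ {ch} and M₂ \ {d ch} is also DF-reducible. -/

import Mathlib

/-- `𝓜` DF-reduces to `𝓜'` via channel `ch`: there are two distinct member
occurrences `M₁`, `M₂` in `𝓜` with `ch ∈ M₁` and `d ch ∈ M₂`, and `𝓜'` is
obtained from `𝓜` by removing `M₁` and `M₂` and adding `(M₁ ∪ M₂) \ {ch, d ch}`. -/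
def DFStepVia {α : Type*} [DecidableEq α] (d : α → α)
    (𝓜 𝓜' : Multiset (Finset α)) (ch : α) : Prop :=
  ∃ M₁ M₂ : Finset α, M₁ ∈ 𝓜 ∧ M₂ ∈ 𝓜.erase M₁ ∧ ch ∈ M₁ ∧ d ch ∈ M₂ ∧
    𝓜' = ((M₁ ∪ M₂) \ {ch, d ch}) ::ₘ ((𝓜.erase M₁).erase M₂)

theorem DFStepVia.card_lt {α : Type*} [DecidableEq α] {d : α → α}
    {𝓜 𝓜' : Multiset (Finset α)} {ch : α}
    (h : DFStepVia d 𝓜 𝓜' ch) : Multiset.card 𝓜' < Multiset.card 𝓜 := by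
  obtain ⟨M₁, M₂, h₁, h₂, -, -, rfl⟩ := h
  have c₁ : Multiset.card (𝓜.erase M₁) < Multiset.card 𝓜 :=
    Multiset.card_erase_lt_of_mem h₁
  have c₂ : Multiset.card ((𝓜.erase M₁).erase M₂) < Multiset.card (𝓜.erase M₁) :=
    Multiset.card_erase_lt_of_mem h₂
  rw [Multiset.card_cons]
  omega

/-- A collection `𝓜` of channel sets is regular if its member sets are pairwise
disjoint and, for every channel `ch`, `ch` belongs to the union of the sets in
`𝓜` iff `d ch` does. -/
def Regular {α : Type*} [DecidableEq α] (d : α → α)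
    (𝓜 : Multiset (Finset α)) : Prop :=
  Multiset.Pairwise (fun M₁ M₂ => Disjoint M₁ M₂) 𝓜 ∧
    ∀ ch : α, ch ∈ 𝓜.sup ↔ d ch ∈ 𝓜.sup

/-- `𝓜` is DF-normal if it DF-reduces to no collection. -/
def DFNormal {α : Type*} [DecidableEq α] (d : α → α)
    (𝓜 : Multiset (Finset α)) : Prop :=
  ¬ ∃ 𝓜' ch, DFStepVia d 𝓜 𝓜' ch

/-- `𝓜` is DF-reducible if either every member set of `𝓜` is empty, or `𝓜` is
not DF-normal and every `𝓜'` to which `𝓜` DF-reduces is DF-reducible. -/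
def DFReducible {α : Type*} [DecidableEq α] (d : α → α)
    (𝓜 : Multiset (Finset α)) : Prop :=
  (∀ M ∈ 𝓜, M = ∅) ∨
    ((∃ 𝓜' ch, DFStepVia d 𝓜 𝓜' ch) ∧
      ∀ 𝓜' ch (h : DFStepVia d 𝓜 𝓜' ch), DFReducible d 𝓜')
termination_by Multiset.card 𝓜
decreasing_by exact h.card_lt

/-!
Regularity puts `ch` and `d ch` in no member other than `M₁` and `M₂`, so cutting the link is the
same as deleting `{ch, d ch}` from every member. Deleting channels from every member commutes with
DF-steps: each step of the cut collection lifts to a step of `𝓜`, and the two results are again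
related by the deletion, so DF-reducibility passes down by induction along reductions. What remains
is that the cut collection is never stuck while non-empty: the dual of a surviving channel survives
and lies in some member, and that member is a different one because a member containing a channel
together with its dual (a loop) persists through every step of a regular collection and so rules
out DF-reducibility.
-/

namespace Multiset

variable {α β : Type*}

theorem pairwise_cons {r : α → α → Prop} [Std.Symm r] {a : α} {s : Multiset α} :
    Pairwise r (a ::ₘ s) ↔ (∀ b ∈ s, r a b) ∧ Pairwise r s :=
  Quotient.inductionOn s fun l => by
    simp only [quot_mk_to_coe, cons_coe, pairwise_coe_iff_pairwise, List.pairwise_cons, mem_coe]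

theorem map_eq_cons_cons [DecidableEq α] {f : α → β} {s : Multiset α} {b₁ b₂ : β}
    {t : Multiset β} (h : s.map f = b₁ ::ₘ b₂ ::ₘ t) :
    ∃ a₁ a₂ u, s = a₁ ::ₘ a₂ ::ₘ u ∧ f a₁ = b₁ ∧ f a₂ = b₂ ∧ u.map f = t := by
  obtain ⟨a₁, ha₁, rfl, h₁⟩ := (map_eq_cons f s _ _).mpr h
  obtain ⟨a₂, ha₂, rfl, h₂⟩ := (map_eq_cons f _ _ _).mpr h₁
  exact ⟨a₁, a₂, _, by rw [cons_erase ha₂, cons_erase ha₁], rfl, rfl, h₂⟩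

theorem mem_sup_iff [DecidableEq α] {s : Multiset (Finset α)} {a : α} :
    a ∈ s.sup ↔ ∃ M ∈ s, a ∈ M := by
  induction s using Multiset.induction with
  | empty => simp
  | cons M s ih => simp [ih]

end Multiset

section

open Multiset

variable {α : Type*} [DecidableEq α] {d : α → α}

theorem mem_pair_dual_iff (hinv : Function.Involutive d) (c a : α) :
    d a ∈ ({c, d c} : Finset α) ↔ a ∈ ({c, d c} : Finset α) := by
  simp only [Finset.mem_insert, Finset.mem_singleton, hinv.injective.eq_iff, hinv.eq_iff]
  exact or_comm

theorem dfStepVia_cons_cons {A B : Finset α} {c : α} (R : Multiset (Finset α))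
    (hA : c ∈ A) (hB : d c ∈ B) :
    DFStepVia d (A ::ₘ B ::ₘ R) (((A ∪ B) \ {c, d c}) ::ₘ R) c :=
  ⟨A, B, mem_cons_self _ _, by simp, hA, hB, by simp⟩

theorem DFStepVia.exists_cons_cons {𝓜 𝓜' : Multiset (Finset α)} {c : α}
    (h : DFStepVia d 𝓜 𝓜' c) :
    ∃ A B R, 𝓜 = A ::ₘ B ::ₘ R ∧ c ∈ A ∧ d c ∈ B ∧
      𝓜' = ((A ∪ B) \ {c, d c}) ::ₘ R := by
  obtain ⟨A, B, hA, hB, hc, hdc, rfl⟩ := h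
  exact ⟨A, B, _, by rw [cons_erase hB, cons_erase hA], hc, hdc, rfl⟩

theorem DFReducible.dfStepVia {𝓜 𝓜' : Multiset (Finset α)} {c : α}
    (hred : DFReducible d 𝓜) (h : DFStepVia d 𝓜 𝓜' c) : DFReducible d 𝓜' := by
  rw [DFReducible] at hred
  rcases hred with hempty | ⟨-, hall⟩
  · obtain ⟨A, -, hA, -, hc, -⟩ := h
    exact absurd (hempty A hA) (Finset.ne_empty_of_mem hc)
  · exact hall _ _ h

theorem Regular.dfStepVia (hinv : Function.Involutive d) {𝓜 𝓜' : Multiset (Finset α)} {c : α}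
    (hreg : Regular d 𝓜) (h : DFStepVia d 𝓜 𝓜' c) : Regular d 𝓜' := by
  obtain ⟨A, B, R, rfl, hc, hdc, rfl⟩ := h.exists_cons_cons
  obtain ⟨hdisj, hclosed⟩ := hreg
  obtain ⟨hA, hB, hR⟩ : (∀ X ∈ B ::ₘ R, Disjoint A X) ∧ (∀ X ∈ R, Disjoint B X) ∧
      Pairwise (fun M₁ M₂ => Disjoint M₁ M₂) R := by
    simpa only [pairwise_cons] using hdisj
  have hsup : ∀ a, a ∈ (((A ∪ B) \ {c, d c}) ::ₘ R).sup ↔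
      a ∈ (A ::ₘ B ::ₘ R).sup ∧ a ∉ ({c, d c} : Finset α) := by
    intro a
    have hRc : ∀ X ∈ R, a ∈ X → a ∉ ({c, d c} : Finset α) := by
      intro X hX haX
      simp only [Finset.mem_insert, Finset.mem_singleton]
      rintro (rfl | rfl)
      · exact Finset.disjoint_left.mp (hA X (mem_cons_of_mem hX)) hc haX
      · exact Finset.disjoint_left.mp (hB X hX) hdc haX
    simp only [mem_sup_iff, mem_cons, exists_eq_or_imp, Finset.mem_sdiff, Finset.mem_union]
    grind
  refine ⟨pairwise_cons.mpr ⟨fun X hX => ?_, hR⟩, fun a => ?_⟩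
  · exact (Finset.disjoint_union_left.mpr ⟨hA X (mem_cons_of_mem hX), hB X hX⟩).mono_left
      Finset.sdiff_subset
  · rw [hsup, hsup, hclosed, mem_pair_dual_iff hinv]

def HasLoop (d : α → α) (𝓜 : Multiset (Finset α)) : Prop :=
  ∃ X ∈ 𝓜, ∃ a ∈ X, d a ∈ X

theorem HasLoop.dfStepVia (hinv : Function.Involutive d) {𝓜 𝓜' : Multiset (Finset α)} {c : α}
    (hdisj : Pairwise (fun M₁ M₂ => Disjoint M₁ M₂) 𝓜) (hloop : HasLoop d 𝓜)
    (h : DFStepVia d 𝓜 𝓜' c) : HasLoop d 𝓜' := by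
  obtain ⟨A, B, R, rfl, hc, hdc, rfl⟩ := h.exists_cons_cons
  obtain ⟨X, hX, a, ha, hda⟩ := hloop
  have hAB : Disjoint A B := (pairwise_cons.mp hdisj).1 B (mem_cons_self _ _)
  have merged : X ⊆ A ∪ B → ¬(c ∈ X ∧ d c ∈ X) → HasLoop d (((A ∪ B) \ {c, d c}) ::ₘ R) := by
    intro hXAB hcX
    have ha' : a ∉ ({c, d c} : Finset α) := by
      simp only [Finset.mem_insert, Finset.mem_singleton]
      rintro (rfl | rfl)
      · exact hcX ⟨ha, hda⟩
      · exact hcX ⟨hinv c ▸ hda, ha⟩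
    refine ⟨_, mem_cons_self _ _, a, ?_, ?_⟩
    · exact Finset.mem_sdiff.mpr ⟨hXAB ha, ha'⟩
    · exact Finset.mem_sdiff.mpr ⟨hXAB hda, (mem_pair_dual_iff hinv c a).not.mpr ha'⟩
  rcases mem_cons.mp hX with rfl | hX
  · exact merged Finset.subset_union_left fun h => Finset.disjoint_left.mp hAB h.2 hdc
  rcases mem_cons.mp hX with rfl | hX
  · exact merged Finset.subset_union_right fun h => Finset.disjoint_left.mp hAB hc h.1
  · exact ⟨X, mem_cons_of_mem hX, a, ha, hda⟩

theorem Regular.not_dfReducible_of_hasLoop (hinv : Function.Involutive d)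
    {𝓜 : Multiset (Finset α)} (hreg : Regular d 𝓜) (hloop : HasLoop d 𝓜) :
    ¬ DFReducible d 𝓜 := by
  intro hred
  rw [DFReducible] at hred
  rcases hred with hempty | ⟨⟨𝓜', c, h⟩, hall⟩
  · obtain ⟨X, hX, a, ha, -⟩ := hloop
    exact absurd (hempty X hX) (Finset.ne_empty_of_mem ha)
  · exact (hreg.dfStepVia hinv h).not_dfReducible_of_hasLoop hinv
      (hloop.dfStepVia hinv hreg.1 h) (hall 𝓜' c h)
termination_by Multiset.card 𝓜
decreasing_by exact h.card_lt

theorem DFStepVia.of_map_sdiff {𝓜 : Multiset (Finset α)} {s : Finset α}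
    {𝓝' : Multiset (Finset α)} {c : α} (h : DFStepVia d (𝓜.map (· \ s)) 𝓝' c) :
    ∃ 𝓜', DFStepVia d 𝓜 𝓜' c ∧ 𝓝' = 𝓜'.map (· \ s) := by
  obtain ⟨A, B, R, hN, hc, hdc, rfl⟩ := h.exists_cons_cons
  obtain ⟨A₀, B₀, R₀, rfl, rfl, rfl, rfl⟩ := map_eq_cons_cons hN
  refine ⟨_, dfStepVia_cons_cons R₀ (Finset.sdiff_subset hc) (Finset.sdiff_subset hdc), ?_⟩
  rw [map_cons, sdiff_sdiff_comm, Finset.union_sdiff_distrib A₀]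

theorem exists_dfStepVia_map_sdiff {𝓜 : Multiset (Finset α)} {s X : Finset α} {a : α}
    (hs : ∀ a, d a ∈ s → a ∈ s) (hclosed : ∀ a ∈ 𝓜.sup, d a ∈ 𝓜.sup) (hloop : ¬ HasLoop d 𝓜)
    (hX : X ∈ 𝓜.map (· \ s)) (ha : a ∈ X) :
    ∃ 𝓝' c, DFStepVia d (𝓜.map (· \ s)) 𝓝' c := by
  obtain ⟨X₀, hX₀, rfl⟩ := mem_map.mp hX
  obtain ⟨haX₀, has⟩ := Finset.mem_sdiff.mp ha
  obtain ⟨Y₀, hY₀, hdaY₀⟩ := mem_sup_iff.mp (hclosed a (mem_sup_iff.mpr ⟨X₀, hX₀, haX₀⟩))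
  have hY₀X₀ : Y₀ ≠ X₀ := by
    rintro rfl
    exact hloop ⟨Y₀, hX₀, a, haX₀, hdaY₀⟩
  have h𝓜 : 𝓜 = X₀ ::ₘ Y₀ ::ₘ (𝓜.erase X₀).erase Y₀ := by
    rw [cons_erase ((mem_erase_of_ne hY₀X₀).mpr hY₀), cons_erase hX₀]
  rw [h𝓜, map_cons, map_cons]
  exact ⟨_, a, dfStepVia_cons_cons _ ha (Finset.mem_sdiff.mpr ⟨hdaY₀, mt (hs a) has⟩)⟩

theorem DFReducible.map_sdiff (hinv : Function.Involutive d) {s : Finset α}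
    (hs : ∀ a, d a ∈ s → a ∈ s) {𝓜 : Multiset (Finset α)} (hreg : Regular d 𝓜)
    (hred : DFReducible d 𝓜) : DFReducible d (𝓜.map (· \ s)) := by
  rw [DFReducible]
  by_cases hempty : ∀ X ∈ 𝓜.map (· \ s), X = ∅
  · exact .inl hempty
  push Not at hempty
  obtain ⟨X, hX, a, ha⟩ := hempty
  have hloop : ¬ HasLoop d 𝓜 := fun hloop => hreg.not_dfReducible_of_hasLoop hinv hloop hred
  refine .inr ⟨exists_dfStepVia_map_sdiff hs (fun a => (hreg.2 a).mp) hloop hX ha, ?_⟩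
  intro 𝓝' c h
  obtain ⟨𝓜', h', rfl⟩ := h.of_map_sdiff
  exact (hred.dfStepVia h').map_sdiff hinv hs (hreg.dfStepVia hinv h')
termination_by Multiset.card 𝓜
decreasing_by exact h'.card_lt

theorem map_sdiff_pair_cons_cons {M₁ M₂ : Finset α} {R : Multiset (Finset α)} {c c' : α}
    (hdisj : Pairwise (fun M₁ M₂ => Disjoint M₁ M₂) (M₁ ::ₘ M₂ ::ₘ R))
    (hc : c ∈ M₁) (hc' : c' ∈ M₂) :
    (M₁ ::ₘ M₂ ::ₘ R).map (· \ {c, c'}) = (M₁ \ {c}) ::ₘ (M₂ \ {c'}) ::ₘ R := by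
  obtain ⟨h₁, h₂, -⟩ : (∀ X ∈ M₂ ::ₘ R, Disjoint M₁ X) ∧ (∀ X ∈ R, Disjoint M₂ X) ∧ _ := by
    simpa only [pairwise_cons] using hdisj
  have hR : R.map (· \ {c, c'}) = R := by
    refine (map_congr rfl fun X hX => Finset.sdiff_eq_self_of_disjoint ?_).trans (map_id' R)
    rw [Finset.disjoint_insert_right, Finset.disjoint_singleton_right]
    exact ⟨Finset.disjoint_left.mp (h₁ X (mem_cons_of_mem hX)) hc,
      Finset.disjoint_left.mp (h₂ X hX) hc'⟩
  rw [map_cons, map_cons, hR, Finset.pair_comm,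
    Finset.sdiff_insert_of_notMem (Finset.disjoint_right.mp (h₁ M₂ (mem_cons_self _ _)) hc'),
    Finset.pair_comm,
    Finset.sdiff_insert_of_notMem (Finset.disjoint_left.mp (h₁ M₂ (mem_cons_self _ _)) hc)]

end

theorem DFReducible.erase_pair_general {α : Type*} [DecidableEq α] (d : α → α)
    (hinv : Function.Involutive d)
    (𝓜 : Multiset (Finset α))
    (hreg : Regular d 𝓜) (hred : DFReducible d 𝓜)
    (M₁ M₂ : Finset α) (ch : α)
    (hM₁ : M₁ ∈ 𝓜) (hM₂ : M₂ ∈ 𝓜.erase M₁)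
    (hch : ch ∈ M₁) (hdch : d ch ∈ M₂) :
    DFReducible d
      ((M₁ \ {ch}) ::ₘ (M₂ \ {d ch}) ::ₘ ((𝓜.erase M₁).erase M₂)) := by
  have h𝓜 : 𝓜 = M₁ ::ₘ M₂ ::ₘ (𝓜.erase M₁).erase M₂ := by
    rw [Multiset.cons_erase hM₂, Multiset.cons_erase hM₁]
  rw [← map_sdiff_pair_cons_cons (h𝓜 ▸ hreg.1) hch hdch, ← h𝓜]
  exact hred.map_sdiff hinv (fun a => (mem_pair_dual_iff hinv ch a).mp) hreg

/-- If a regular DF-reducible collection `𝓜` has two distinct member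
occurrences `M₁`, `M₂` with `ch ∈ M₁` and `d ch ∈ M₂`, then the collection
obtained by removing `M₁` and `M₂` and adding the two sets `M₁ \ {ch}` and
`M₂ \ {d ch}` is also DF-reducible. -/
theorem DFReducible.erase_pair {α : Type*} [DecidableEq α] (d : α → α)
    (hinv : Function.Involutive d) (hfpf : ∀ ch : α, d ch ≠ ch)
    (𝓜 : Multiset (Finset α)) (hne : 𝓜 ≠ 0)
    (hreg : Regular d 𝓜) (hred : DFReducible d 𝓜)
    (M₁ M₂ : Finset α) (ch : α)
    (hM₁ : M₁ ∈ 𝓜) (hM₂ : M₂ ∈ 𝓜.erase M₁)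
    (hch : ch ∈ M₁) (hdch : d ch ∈ M₂) :
    DFReducible d
      ((M₁ \ {ch}) ::ₘ (M₂ \ {d ch}) ::ₘ ((𝓜.erase M₁).erase M₂)) :=
  DFReducible.erase_pair_general d hinv 𝓜 hreg hred M₁ M₂ ch hM₁ hM₂ hch hdch
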